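/- The XXZ Hamiltonian H = Σ_{x=1}^{L-1} h_{x,x+1} on (ℂ²)^{⊗L} with Δ > 1 has ground state energy 0, its kernel equals the span of the all-up state |↑…↑⟩ and the all-down state |↓…↓⟩, and H ≥ ((1-Δ⁻¹)/2)(1 - Q), where Q is the orthogonal projection onto span{|↑…↑⟩, |↓…↓⟩}. -/

import Mathlib

open Matrix Complex
open scoped Kronecker

noncomputable def spin1 : Matrix (Fin 2) (Fin 2) ℂ := !![0, 1/2; 1/2, 0]
noncomputable def spin2 : Matrix (Fin 2) (Fin 2) ℂ := !![0, -I/2; I/2, 0]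
noncomputable def spin3 : Matrix (Fin 2) (Fin 2) ℂ := !![1/2, 0; 0, -1/2]

/-- The two-site XXZ interaction on `ℂ² ⊗ ℂ²`. -/
noncomputable def hXXZ2 (Δ : ℝ) : Matrix (Fin 2 × Fin 2) (Fin 2 × Fin 2) ℂ :=
  (-(Δ⁻¹ : ℂ)) • (spin1 ⊗ₖ spin1 + spin2 ⊗ₖ spin2 + spin3 ⊗ₖ spin3 - (1/4 : ℂ) • 1)
    - ((1 : ℂ) - (Δ⁻¹ : ℂ)) • (spin3 ⊗ₖ spin3 - (1/4 : ℂ) • 1)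

/-- The XXZ chain Hamiltonian `H = Σ_{x=1}^{L-1} h_{x,x+1}` on `(ℂ²)^{⊗L}`, with
configuration space `Fin L → Fin 2` (`0` = spin up, `1` = spin down).  The term
`h_{x,x+1}` acts as the two-site XXZ interaction on sites `x, x+1` and as the identity
elsewhere. -/
noncomputable def chainXXZ (Δ : ℝ) (L : ℕ) :
    Matrix (Fin L → Fin 2) (Fin L → Fin 2) ℂ :=
  ∑ x ∈ Finset.range (L - 1), Matrix.of fun σ τ =>
    if h : x + 1 < L then
      hXXZ2 Δ (σ ⟨x, by omega⟩, σ ⟨x + 1, h⟩) (τ ⟨x, by omega⟩, τ ⟨x + 1, h⟩) *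
        (if ∀ y : Fin L, (y : ℕ) ≠ x → (y : ℕ) ≠ x + 1 → σ y = τ y then 1 else 0)
    else 0

/-- the all-up state `|↑…↑⟩`. -/
def allUp (L : ℕ) : (Fin L → Fin 2) → ℂ := fun σ => if σ = fun _ => 0 then 1 else 0

/-- the all-down state `|↓…↓⟩`. -/
def allDown (L : ℕ) : (Fin L → Fin 2) → ℂ := fun σ => if σ = fun _ => 1 then 1 else 0

/-- the orthogonal projection onto `span{|↑…↑⟩, |↓…↓⟩}`. -/
noncomputable def projUpDown (L : ℕ) : Matrix (Fin L → Fin 2) (Fin L → Fin 2) ℂ :=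
  Matrix.of fun σ τ => allUp L σ * allUp L τ + allDown L σ * allDown L τ

/- ### Auxiliary lemmas -/

lemma hXXZ2_apply (Δ : ℝ) (a b c d : Fin 2) :
    hXXZ2 Δ (a,b) (c,d) =
      (if a ≠ b ∧ c = a ∧ d = b then (1/2:ℂ) else 0)
      + (if a ≠ b ∧ c = b ∧ d = a then -((Δ⁻¹:ℂ)/2) else 0) := by
  fin_cases a <;> fin_cases b <;> fin_cases c <;> fin_cases d <;>
    simp [hXXZ2, spin1, spin2, spin3, Matrix.kroneckerMap_apply, Matrix.one_apply,
      Matrix.sub_apply, Matrix.add_apply, Matrix.smul_apply, Prod.ext_iff] <;>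
    norm_num [Complex.ext_iff] <;> ring

/-- abstract two-site term acting on sites `i`, `j`. -/
noncomputable def Mterm (Δ : ℝ) {L : ℕ} (i j : Fin L) :
    Matrix (Fin L → Fin 2) (Fin L → Fin 2) ℂ :=
  Matrix.of fun σ τ => hXXZ2 Δ (σ i, σ j) (τ i, τ j) *
    (if ∀ y : Fin L, y ≠ i → y ≠ j → σ y = τ y then 1 else 0)

lemma ite_mul_ind {c : ℂ} {P Q R : Prop} [Decidable P] [Decidable Q] [Decidable R]
    (h : P ∧ Q ↔ R) : (if P then c else 0) * (if Q then (1:ℂ) else 0) = if R then c else 0 := by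
  split_ifs with h1 h2 h3 <;> simp_all

lemma Mterm_apply (Δ : ℝ) {L : ℕ} {i j : Fin L} (hij : i ≠ j) (σ τ : Fin L → Fin 2) :
    Mterm Δ i j σ τ =
      (if σ i ≠ σ j ∧ τ = σ then (1/2 : ℂ) else 0)
      + (if σ i ≠ σ j ∧ τ = σ ∘ Equiv.swap i j then -((Δ⁻¹:ℂ)/2) else 0) := by
  show hXXZ2 Δ (σ i, σ j) (τ i, τ j) * _ = _
  rw [hXXZ2_apply, add_mul]
  congr 1
  · refine ite_mul_ind ?_
    constructor
    · rintro ⟨⟨h1, h2, h3⟩, h4⟩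
      refine ⟨h1, funext fun y => ?_⟩
      by_cases hyi : y = i
      · subst hyi; exact h2
      · by_cases hyj : y = j
        · subst hyj; exact h3
        · exact (h4 y hyi hyj).symm
    · rintro ⟨h1, rfl⟩
      exact ⟨⟨h1, rfl, rfl⟩, fun y _ _ => rfl⟩
  · refine ite_mul_ind ?_
    constructor
    · rintro ⟨⟨h1, h2, h3⟩, h4⟩
      refine ⟨h1, funext fun y => ?_⟩
      by_cases hyi : y = i
      · subst hyi
        rw [Function.comp_apply, Equiv.swap_apply_left]
        exact h2
      · by_cases hyj : y = j
        · subst hyj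
          rw [Function.comp_apply, Equiv.swap_apply_right]
          exact h3
        · rw [Function.comp_apply, Equiv.swap_apply_of_ne_of_ne hyi hyj]
          exact (h4 y hyi hyj).symm
    · rintro ⟨h1, rfl⟩
      refine ⟨⟨h1, ?_, ?_⟩, fun y hyi hyj => ?_⟩
      · rw [Function.comp_apply, Equiv.swap_apply_left]
      · rw [Function.comp_apply, Equiv.swap_apply_right]
      · rw [Function.comp_apply, Equiv.swap_apply_of_ne_of_ne hyi hyj]

lemma Mterm_mulVec (Δ : ℝ) {L : ℕ} {i j : Fin L} (hij : i ≠ j)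
    (v : (Fin L → Fin 2) → ℂ) (σ : Fin L → Fin 2) :
    (Mterm Δ i j *ᵥ v) σ =
      if σ i ≠ σ j then (1/2 : ℂ) * v σ - ((Δ⁻¹:ℂ)/2) * v (σ ∘ Equiv.swap i j) else 0 := by
  have key : ∀ (c : ℂ) (σ₀ : Fin L → Fin 2),
      (∑ τ : Fin L → Fin 2, (if σ i ≠ σ j ∧ τ = σ₀ then c else 0) * v τ)
        = if σ i ≠ σ j then c * v σ₀ else 0 := by
    intro c σ₀
    by_cases h : σ i ≠ σ j
    · simp [h, ite_mul, Finset.sum_ite_eq']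
    · simp [h]
  show (∑ τ : Fin L → Fin 2, Mterm Δ i j σ τ * v τ) = _
  simp only [Mterm_apply Δ hij, add_mul, Finset.sum_add_distrib, key]
  split_ifs <;> ring

lemma re_conj_mul_le (a b : ℂ) :
    2 * ((starRingEnd ℂ) a * b).re ≤ normSq a + normSq b := by
  simp only [Complex.normSq_apply, Complex.mul_re, Complex.conj_re, Complex.conj_im]
  nlinarith [sq_nonneg (a.re - b.re), sq_nonneg (a.im - b.im)]

/-- quadratic-form lower bound for the abstract two-site term. -/
lemma Mterm_re_ge (Δ : ℝ) (ht0 : 0 ≤ Δ⁻¹) {L : ℕ} {i j : Fin L} (hij : i ≠ j)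
    (v : (Fin L → Fin 2) → ℂ) :
    ((1 - Δ⁻¹)/2) * (∑ σ : Fin L → Fin 2, if σ i ≠ σ j then normSq (v σ) else 0)
      ≤ (star v ⬝ᵥ (Mterm Δ i j *ᵥ v)).re := by
  classical
  set S : ℝ := ∑ σ : Fin L → Fin 2, if σ i ≠ σ j then normSq (v σ) else 0 with hS
  set S' : ℝ := ∑ σ : Fin L → Fin 2,
    if σ i ≠ σ j then normSq (v (σ ∘ Equiv.swap i j)) else 0 with hS'
  set R : ℝ := ∑ σ : Fin L → Fin 2,
    if σ i ≠ σ j then ((starRingEnd ℂ) (v σ) * v (σ ∘ Equiv.swap i j)).re else 0 with hRdef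
  have hre : (star v ⬝ᵥ (Mterm Δ i j *ᵥ v)).re = (1/2) * S - (Δ⁻¹/2) * R := by
    rw [dotProduct, Complex.re_sum, hS, hRdef, Finset.mul_sum, Finset.mul_sum,
      ← Finset.sum_sub_distrib]
    refine Finset.sum_congr rfl fun σ _ => ?_
    rw [Mterm_mulVec Δ hij]
    by_cases h : σ i ≠ σ j
    · simp only [if_pos h, Pi.star_apply]
      have hc1 : (1/2 : ℂ) = ((1/2 : ℝ) : ℂ) := by norm_num
      have hc2 : ((Δ⁻¹:ℂ)/2) = ((Δ⁻¹/2 : ℝ) : ℂ) := by push_cast; ring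
      rw [hc1, hc2]
      have expand : star (v σ) * (((1/2 : ℝ):ℂ) * v σ - ((Δ⁻¹/2 : ℝ):ℂ) * v (σ ∘ Equiv.swap i j))
          = ((1/2:ℝ):ℂ) * ((normSq (v σ) : ℝ) : ℂ)
            - ((Δ⁻¹/2:ℝ):ℂ) * ((starRingEnd ℂ) (v σ) * v (σ ∘ Equiv.swap i j)) := by
        rw [RCLike.star_def, Complex.normSq_eq_conj_mul_self]; ring
      rw [expand, Complex.sub_re, Complex.re_ofReal_mul, Complex.re_ofReal_mul, Complex.ofReal_re]
    · simp [h]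
  have hswap : S' = S := by
    rw [hS, hS']
    refine Fintype.sum_equiv
      ⟨fun σ => σ ∘ Equiv.swap i j, fun σ => σ ∘ Equiv.swap i j,
        fun σ => by funext y; simp, fun σ => by funext y; simp⟩ _ _ fun σ => ?_
    show (if σ i ≠ σ j then normSq (v (σ ∘ ⇑(Equiv.swap i j))) else 0)
      = (if (σ ∘ ⇑(Equiv.swap i j)) i ≠ (σ ∘ ⇑(Equiv.swap i j)) j
          then normSq (v (σ ∘ ⇑(Equiv.swap i j))) else 0)
    have h1 : (σ ∘ ⇑(Equiv.swap i j)) i = σ j := by simp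
    have h2 : (σ ∘ ⇑(Equiv.swap i j)) j = σ i := by simp
    rw [h1, h2]
    exact if_congr ne_comm rfl rfl
  have hR : R ≤ S := by
    have h2R : 2 * R ≤ S + S' := by
      rw [hRdef, Finset.mul_sum, hS, hS', ← Finset.sum_add_distrib]
      refine Finset.sum_le_sum fun σ _ => ?_
      by_cases h : σ i ≠ σ j
      · simp only [if_pos h]
        exact re_conj_mul_le (v σ) (v (σ ∘ Equiv.swap i j))
      · simp only [if_neg h]
        norm_num
    rw [hswap] at h2R; linarith
  have hS0 : 0 ≤ S := by
    rw [hS]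
    refine Finset.sum_nonneg fun σ _ => ?_
    split_ifs
    · exact normSq_nonneg _
    · exact le_refl 0
  rw [hre]
  nlinarith [mul_nonneg ht0 (sub_nonneg.2 hR)]

/-- the per-site "jump weight". -/
noncomputable def Sx (L : ℕ) (v : (Fin L → Fin 2) → ℂ) (x : ℕ) : ℝ :=
  if h : x + 1 < L then
    ∑ σ : Fin L → Fin 2, (if σ ⟨x, by omega⟩ ≠ σ ⟨x + 1, h⟩ then normSq (v σ) else 0)
  else 0

lemma Sx_nonneg (L : ℕ) (v : (Fin L → Fin 2) → ℂ) (x : ℕ) : 0 ≤ Sx L v x := by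
  rw [Sx]
  split_ifs
  · refine Finset.sum_nonneg fun σ _ => ?_
    split_ifs
    · exact normSq_nonneg _
    · exact le_refl 0
  · exact le_refl 0

lemma sum_mulVec' {n : Type*} [Fintype n] [DecidableEq n] (s : Finset ℕ)
    (A : ℕ → Matrix n n ℂ) (v : n → ℂ) :
    (∑ x ∈ s, A x) *ᵥ v = ∑ x ∈ s, A x *ᵥ v := by
  funext σ
  simp only [mulVec, dotProduct, Matrix.sum_apply, Finset.sum_apply, Finset.sum_mul]
  exact Finset.sum_comm

lemma dotProduct_sum' {n : Type*} [Fintype n] (s : Finset ℕ) (v : n → ℂ) (w : ℕ → n → ℂ) :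
    v ⬝ᵥ (∑ x ∈ s, w x) = ∑ x ∈ s, v ⬝ᵥ w x := by
  simp only [dotProduct, Finset.sum_apply, Finset.mul_sum]
  exact Finset.sum_comm

lemma summand_eq (Δ : ℝ) {L : ℕ} (x : ℕ) (hx : x + 1 < L) :
    (Matrix.of fun σ τ : Fin L → Fin 2 =>
      if h : x + 1 < L then
        hXXZ2 Δ (σ ⟨x, by omega⟩, σ ⟨x + 1, h⟩) (τ ⟨x, by omega⟩, τ ⟨x + 1, h⟩) *
          (if ∀ y : Fin L, (y : ℕ) ≠ x → (y : ℕ) ≠ x + 1 → σ y = τ y then 1 else 0)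
      else 0) = Mterm Δ (⟨x, by omega⟩ : Fin L) ⟨x + 1, hx⟩ := by
  ext σ τ
  rw [Matrix.of_apply, dif_pos hx, Mterm, Matrix.of_apply]
  congr 1
  refine if_congr (forall_congr' fun y => ?_) rfl rfl
  simp [Fin.ext_iff]

lemma chain_ge (Δ : ℝ) (ht0 : 0 ≤ Δ⁻¹) (L : ℕ) (hL : 2 ≤ L) (v : (Fin L → Fin 2) → ℂ) :
    ((1 - Δ⁻¹)/2) * (∑ x ∈ Finset.range (L - 1), Sx L v x)
      ≤ (star v ⬝ᵥ (chainXXZ Δ L *ᵥ v)).re := by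
  rw [chainXXZ, sum_mulVec', dotProduct_sum', Complex.re_sum, Finset.mul_sum]
  refine Finset.sum_le_sum fun x hx => ?_
  have hx1 : x + 1 < L := by
    have := Finset.mem_range.1 hx; omega
  have hij : (⟨x, by omega⟩ : Fin L) ≠ ⟨x + 1, hx1⟩ := by
    simp [Fin.ext_iff]
  rw [summand_eq Δ x hx1, Sx, dif_pos hx1]
  exact Mterm_re_ge Δ ht0 hij v

lemma allConst_of_noJump {L : ℕ} (hL : 0 < L) (σ : Fin L → Fin 2)
    (h : ∀ x (hx : x + 1 < L), σ ⟨x, by omega⟩ = σ ⟨x + 1, hx⟩) :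
    σ = fun _ => σ ⟨0, hL⟩ := by
  have H : ∀ k (hk : k < L), σ ⟨k, hk⟩ = σ ⟨0, hL⟩ := by
    intro k
    induction k with
    | zero => intro hk; rfl
    | succ n ih =>
      intro hk
      rw [← h n hk]
      exact ih (by omega)
  funext y
  exact H y.1 y.2

lemma exists_jump {L : ℕ} (hL : 2 ≤ L) (σ : Fin L → Fin 2)
    (h0 : σ ≠ fun _ => 0) (h1 : σ ≠ fun _ => 1) :
    ∃ x, ∃ h : x + 1 < L, σ ⟨x, by omega⟩ ≠ σ ⟨x + 1, h⟩ := by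
  by_contra hcon
  push_neg at hcon
  have hL0 : 0 < L := by omega
  have hconst := allConst_of_noJump hL0 σ hcon
  have h2 : ∀ a : Fin 2, a = 0 ∨ a = 1 := by decide
  rcases h2 (σ ⟨0, hL0⟩) with h | h
  · exact h0 (by rw [hconst, h])
  · exact h1 (by rw [hconst, h])

lemma chain_const (Δ : ℝ) {L : ℕ} (hL : 2 ≤ L) (c : Fin 2) :
    chainXXZ Δ L *ᵥ (fun σ => if σ = fun _ => c then 1 else 0) = 0 := by
  rw [chainXXZ, sum_mulVec']
  refine Finset.sum_eq_zero fun x hx => ?_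
  have hx1 : x + 1 < L := by
    have := Finset.mem_range.1 hx; omega
  have hij : (⟨x, by omega⟩ : Fin L) ≠ ⟨x + 1, hx1⟩ := by
    simp [Fin.ext_iff]
  rw [summand_eq Δ x hx1]
  funext σ
  rw [Mterm_mulVec Δ hij]
  show _ = (0 : ℂ)
  by_cases h : σ (⟨x, by omega⟩ : Fin L) ≠ σ ⟨x + 1, hx1⟩
  · have hA : (if σ = fun _ => c then (1:ℂ) else 0) = 0 := by
      rw [if_neg]
      intro e
      exact h (by rw [e])
    have hB : (if (σ ∘ Equiv.swap (⟨x, by omega⟩ : Fin L) ⟨x + 1, hx1⟩) = fun _ => c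
        then (1:ℂ) else 0) = 0 := by
      rw [if_neg]
      intro e
      apply h
      have e1 := congrFun e (⟨x, by omega⟩ : Fin L)
      have e2 := congrFun e (⟨x + 1, hx1⟩ : Fin L)
      rw [Function.comp_apply, Equiv.swap_apply_left] at e1
      rw [Function.comp_apply, Equiv.swap_apply_right] at e2
      rw [e1, e2]
    rw [if_pos h]
    show (1/2 : ℂ) * (if σ = fun _ => c then (1:ℂ) else 0)
        - ((Δ⁻¹:ℂ)/2) * (if (σ ∘ Equiv.swap (⟨x, by omega⟩ : Fin L) ⟨x + 1, hx1⟩) = fun _ => c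
            then (1:ℂ) else 0) = 0
    rw [hA, hB]
    ring
  · rw [if_neg h]

lemma const_ne {L : ℕ} (hL : 2 ≤ L) : (fun _ : Fin L => (0 : Fin 2)) ≠ fun _ => 1 := by
  intro h
  have := congrFun h ⟨0, by omega⟩
  simp at this

lemma proj_quad {L : ℕ} (hL : 2 ≤ L) (v : (Fin L → Fin 2) → ℂ) :
    (star v ⬝ᵥ ((1 - projUpDown L) *ᵥ v)).re
      = ∑ σ : Fin L → Fin 2,
          (if σ = (fun _ => 0) ∨ σ = (fun _ => 1) then 0 else normSq (v σ)) := by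
  have hne := const_ne hL
  rw [sub_mulVec, one_mulVec, dotProduct_sub, Complex.sub_re]
  have hid : (star v ⬝ᵥ v).re = ∑ σ : Fin L → Fin 2, normSq (v σ) := by
    rw [dotProduct, Complex.re_sum]
    refine Finset.sum_congr rfl fun σ _ => ?_
    rw [Pi.star_apply, RCLike.star_def, ← Complex.normSq_eq_conj_mul_self, Complex.ofReal_re]
  have hproj : (star v ⬝ᵥ (projUpDown L *ᵥ v)).re
      = normSq (v (fun _ => 0)) + normSq (v (fun _ => 1)) := by
    have hmv : projUpDown L *ᵥ v
        = fun σ => allUp L σ * v (fun _ => 0) + allDown L σ * v (fun _ => 1) := by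
      funext σ
      show (∑ τ : Fin L → Fin 2, (allUp L σ * allUp L τ + allDown L σ * allDown L τ) * v τ) = _
      simp only [allUp, allDown, add_mul, Finset.sum_add_distrib, mul_ite, ite_mul,
        mul_one, mul_zero, zero_mul, one_mul, Finset.sum_ite_eq', Finset.mem_univ, if_true]
    rw [hmv, dotProduct, Complex.re_sum]
    have hterm : ∀ σ : Fin L → Fin 2,
        (star v σ * (allUp L σ * v (fun _ => 0) + allDown L σ * v (fun _ => 1))).re
          = (if σ = (fun _ => 0) then normSq (v (fun _ => 0)) else 0)
            + (if σ = (fun _ => 1) then normSq (v (fun _ => 1)) else 0) := by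
      intro σ
      rw [Pi.star_apply, RCLike.star_def, allUp, allDown]
      by_cases h0 : σ = (fun _ => 0)
      · subst h0
        rw [if_pos rfl, if_neg hne, if_pos rfl, if_neg hne]
        simp [← Complex.normSq_eq_conj_mul_self]
      · by_cases h1 : σ = (fun _ => 1)
        · subst h1
          rw [if_neg (fun e => hne e.symm), if_pos rfl, if_neg h0, if_pos rfl]
          simp [← Complex.normSq_eq_conj_mul_self]
        · rw [if_neg h0, if_neg h1, if_neg h0, if_neg h1]
          simp
    rw [Finset.sum_congr rfl fun σ _ => hterm σ, Finset.sum_add_distrib,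
      Finset.sum_ite_eq', Finset.sum_ite_eq']
    simp
  rw [hid, hproj]
  have split : ∑ σ : Fin L → Fin 2, normSq (v σ)
      = normSq (v (fun _ => 0)) + normSq (v (fun _ => 1))
        + ∑ σ : Fin L → Fin 2,
            (if σ = (fun _ => 0) ∨ σ = (fun _ => 1) then 0 else normSq (v σ)) := by
    have hterm : ∀ σ : Fin L → Fin 2, normSq (v σ)
        = ((if σ = (fun _ => 0) then normSq (v σ) else 0)
            + (if σ = (fun _ => 1) then normSq (v σ) else 0))
          + (if σ = (fun _ => 0) ∨ σ = (fun _ => 1) then 0 else normSq (v σ)) := by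
      intro σ
      by_cases h0 : σ = (fun _ => 0)
      · subst h0
        rw [if_pos rfl, if_neg hne, if_pos (Or.inl rfl)]
        ring
      · by_cases h1 : σ = (fun _ => 1)
        · subst h1
          rw [if_neg h0, if_pos rfl, if_pos (Or.inr rfl)]
          ring
        · rw [if_neg h0, if_neg h1, if_neg (by tauto)]
          ring
    rw [Finset.sum_congr rfl fun σ _ => hterm σ, Finset.sum_add_distrib, Finset.sum_add_distrib,
      Finset.sum_ite_eq', Finset.sum_ite_eq']
    simp [add_assoc]
  rw [split]
  ring

lemma sum_Sx_ge {L : ℕ} (hL : 2 ≤ L) (v : (Fin L → Fin 2) → ℂ) :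
    (∑ σ : Fin L → Fin 2, if σ = (fun _ => 0) ∨ σ = (fun _ => 1) then 0 else normSq (v σ))
      ≤ ∑ x ∈ Finset.range (L - 1), Sx L v x := by
  have step : ∀ x ∈ Finset.range (L - 1), Sx L v x
      = ∑ σ : Fin L → Fin 2, (if h : x + 1 < L then
          (if σ ⟨x, by omega⟩ ≠ σ ⟨x + 1, h⟩ then normSq (v σ) else 0) else 0) := by
    intro x hx
    have hx1 : x + 1 < L := by
      have := Finset.mem_range.1 hx; omega
    rw [Sx, dif_pos hx1]
    exact Finset.sum_congr rfl fun σ _ => by rw [dif_pos hx1]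
  rw [Finset.sum_congr rfl step, Finset.sum_comm]
  refine Finset.sum_le_sum fun σ _ => ?_
  by_cases hσ : σ = (fun _ => 0) ∨ σ = (fun _ => 1)
  · rw [if_pos hσ]
    refine Finset.sum_nonneg fun x _ => ?_
    split_ifs
    · exact normSq_nonneg _
    · exact le_refl 0
    · exact le_refl 0
  · rw [if_neg hσ]
    push_neg at hσ
    obtain ⟨x, hx1, hne⟩ := exists_jump hL σ hσ.1 hσ.2
    have hxr : x ∈ Finset.range (L - 1) := Finset.mem_range.2 (by omega)
    have hle := Finset.single_le_sum
      (f := fun x => if h : x + 1 < L then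
        (if σ ⟨x, by omega⟩ ≠ σ ⟨x + 1, h⟩ then normSq (v σ) else 0) else 0)
      (fun x _ => by
        split_ifs
        · exact normSq_nonneg _
        · exact le_refl 0
        · exact le_refl 0) hxr
    refine le_trans (le_of_eq ?_) hle
    rw [dif_pos hx1, if_pos hne]

/-- the XXZ chain Hamiltonian with `Δ > 1` on `(ℂ²)^{⊗L}` is nonnegative
(ground state energy `0`), its kernel is exactly `span{|↑…↑⟩, |↓…↓⟩}`, and
`H ≥ ((1-Δ⁻¹)/2)(1 - Q)` where `Q` projects onto `span{|↑…↑⟩, |↓…↓⟩}`. -/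
theorem chain_XXZ_ground_states_and_gap (Δ : ℝ) (hΔ : 1 < Δ) (L : ℕ) (hL : 2 ≤ L) :
    (∀ v : (Fin L → Fin 2) → ℂ, 0 ≤ (star v ⬝ᵥ (chainXXZ Δ L *ᵥ v)).re) ∧
    (∀ v : (Fin L → Fin 2) → ℂ,
      chainXXZ Δ L *ᵥ v = 0 ↔ v ∈ Submodule.span ℂ ({allUp L, allDown L} :
        Set ((Fin L → Fin 2) → ℂ))) ∧
    (∀ v : (Fin L → Fin 2) → ℂ,
      ((1 - Δ⁻¹) / 2) * (star v ⬝ᵥ ((1 - projUpDown L) *ᵥ v)).re ≤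
        (star v ⬝ᵥ (chainXXZ Δ L *ᵥ v)).re) := by
  have hΔ0 : (0:ℝ) < Δ := by linarith
  have ht0 : 0 ≤ Δ⁻¹ := le_of_lt (inv_pos.2 hΔ0)
  have htlt : Δ⁻¹ < 1 := by
    have h1 : Δ⁻¹ * Δ = 1 := inv_mul_cancel₀ (ne_of_gt hΔ0)
    nlinarith
  have hc : 0 < (1 - Δ⁻¹) / 2 := by linarith
  have keyv : ∀ v : (Fin L → Fin 2) → ℂ,
      ((1 - Δ⁻¹)/2) * (∑ x ∈ Finset.range (L - 1), Sx L v x)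
        ≤ (star v ⬝ᵥ (chainXXZ Δ L *ᵥ v)).re := fun v => chain_ge Δ ht0 L hL v
  have hSsum : ∀ v : (Fin L → Fin 2) → ℂ, 0 ≤ ∑ x ∈ Finset.range (L - 1), Sx L v x :=
    fun v => Finset.sum_nonneg fun x _ => Sx_nonneg L v x
  refine ⟨fun v => le_trans (mul_nonneg (le_of_lt hc) (hSsum v)) (keyv v), fun v => ?_, fun v => ?_⟩
  · constructor
    · intro hv
      have h0 : (star v ⬝ᵥ (chainXXZ Δ L *ᵥ v)).re = 0 := by
        rw [hv]
        simp
      have hsum0 : ∑ x ∈ Finset.range (L - 1), Sx L v x = 0 := by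
        nlinarith [keyv v, hSsum v]
      have hvanish : ∀ σ : Fin L → Fin 2,
          σ ≠ (fun _ => 0) → σ ≠ (fun _ => 1) → v σ = 0 := by
        intro σ hσ0 hσ1
        obtain ⟨x, hx1, hne⟩ := exists_jump hL σ hσ0 hσ1
        have hx0 : Sx L v x = 0 :=
          (Finset.sum_eq_zero_iff_of_nonneg fun x _ => Sx_nonneg L v x).1 hsum0 x
            (Finset.mem_range.2 (by omega))
        rw [Sx, dif_pos hx1] at hx0
        have hterm := (Finset.sum_eq_zero_iff_of_nonneg fun σ _ => by
          split_ifs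
          · exact normSq_nonneg _
          · exact le_refl 0).1 hx0 σ (Finset.mem_univ σ)
        rw [if_pos hne] at hterm
        exact Complex.normSq_eq_zero.1 hterm
      rw [Submodule.mem_span_pair]
      refine ⟨v (fun _ => 0), v (fun _ => 1), ?_⟩
      funext σ
      rw [Pi.add_apply, Pi.smul_apply, Pi.smul_apply, smul_eq_mul, smul_eq_mul]
      show v (fun _ => 0) * allUp L σ + v (fun _ => 1) * allDown L σ = v σ
      rw [allUp, allDown]
      by_cases h0' : σ = (fun _ => 0)
      · subst h0'
        rw [if_pos rfl, if_neg (const_ne hL)]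
        ring
      · by_cases h1' : σ = (fun _ => 1)
        · subst h1'
          rw [if_neg (fun e => const_ne hL e.symm), if_pos rfl]
          ring
        · rw [if_neg h0', if_neg h1', hvanish σ h0' h1']
          ring
    · intro hv
      rw [Submodule.mem_span_pair] at hv
      obtain ⟨a, b, rfl⟩ := hv
      rw [mulVec_add, mulVec_smul, mulVec_smul]
      have h1 : chainXXZ Δ L *ᵥ allUp L = 0 := chain_const Δ hL 0
      have h2 : chainXXZ Δ L *ᵥ allDown L = 0 := chain_const Δ hL 1
      rw [h1, h2]
      simp
  · rw [proj_quad hL v]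
    refine le_trans ?_ (keyv v)
    exact mul_le_mul_of_nonneg_left (sum_Sx_ge hL v) (le_of_lt hc)
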